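/- Let S be any semigroup and h : OI_n(L) → S a semigroup homomorphism that is not annihilating (i.e., h is not a constant map). Then the image h(OI_n(L)) contains a subsemigroup isomorphic to the semigroup B_X of X×X matrix units for some infinite set X. -/

import Mathlib

open Set Topology TopologicalSpace

universe u v

variable {L : Type u}

/-- A partial map `f : L →. L` is a finite partial order isomorphism of rank `≤ n`:
its domain is finite with at most `n` elements, and it is an order isomorphism
from its domain onto its range. -/
def IsOI [LinearOrder L] (n : ℕ) (f : L →. L) : Prop :=
  f.Dom.Finite ∧ f.Dom.ncard ≤ n ∧
    ∀ x ∈ f.Dom, ∀ y ∈ f.Dom, ∀ a b, a ∈ f x → b ∈ f y → (x ≤ y ↔ a ≤ b)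

/-- The semigroup `OI_n(L)` of finite partial order isomorphisms of rank `≤ n`. -/
def OI (L : Type u) [LinearOrder L] (n : ℕ) : Type u := {f : L →. L // IsOI n f}

theorem IsOI.comp [LinearOrder L] {n : ℕ} {f g : L →. L}
    (hf : IsOI n f) (hg : IsOI n g) : IsOI n (g.comp f) := by
  have hsub : (g.comp f).Dom ⊆ f.Dom := by
    intro x hx
    rw [PFun.mem_dom] at hx ⊢
    obtain ⟨c, hc⟩ := hx
    rw [PFun.comp_apply] at hc
    obtain ⟨b, hb, -⟩ := Part.mem_bind_iff.mp hc
    exact ⟨b, hb⟩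
  refine ⟨hf.1.subset hsub, le_trans (Set.ncard_le_ncard hsub hf.1) hf.2.1, ?_⟩
  intro x hx y hy a b ha hb
  rw [PFun.comp_apply] at ha hb
  obtain ⟨u, hu, hau⟩ := Part.mem_bind_iff.mp ha
  obtain ⟨v, hv, hbv⟩ := Part.mem_bind_iff.mp hb
  have hxd : x ∈ f.Dom := (PFun.mem_dom _ _).mpr ⟨u, hu⟩
  have hyd : y ∈ f.Dom := (PFun.mem_dom _ _).mpr ⟨v, hv⟩
  have hud : u ∈ g.Dom := (PFun.mem_dom _ _).mpr ⟨a, hau⟩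
  have hvd : v ∈ g.Dom := (PFun.mem_dom _ _).mpr ⟨b, hbv⟩
  exact (hf.2.2 x hxd y hyd u v hu hv).trans (hg.2.2 u hud v hvd a b hau hbv)

/-- Multiplication on `OI_n(L)`, written in the paper's (left-to-right) convention:
`x (α * β) = (x α) β`, i.e. `α * β` is the composition `β ∘ α` of partial maps. -/
instance [LinearOrder L] {n : ℕ} : Semigroup (OI L n) where
  mul a b := ⟨b.1.comp a.1, a.2.comp b.2⟩
  mul_assoc a b c := Subtype.ext (PFun.comp_assoc c.1 b.1 a.1).symm

/-- The inverse partial map of a partial map. -/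
noncomputable def pinv (f : L →. L) : L →. L :=
  fun y => ⟨∃ x, y ∈ f x, fun h => Classical.choose h⟩

theorem pinv_spec {f : L →. L} {y b : L} (h : b ∈ pinv f y) : y ∈ f b := by
  obtain ⟨hd, hb⟩ := h
  exact hb ▸ Classical.choose_spec hd

theorem IsOI.pinv [LinearOrder L] {n : ℕ} {f : L →. L} (hf : IsOI n f) :
    IsOI n (_root_.pinv f) := by
  classical
  have hdom : (_root_.pinv f).Dom =
      (fun x => if h : (f x).Dom then (f x).get h else x) '' f.Dom := by
    ext y
    constructor
    · rintro ⟨x, hx⟩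
      have hxd : (f x).Dom := Part.dom_iff_mem.mpr ⟨y, hx⟩
      refine ⟨x, hxd, ?_⟩
      show (if h : (f x).Dom then (f x).get h else x) = y
      rw [dif_pos hxd]
      exact Part.get_eq_of_mem hx hxd
    · rintro ⟨x, hxd, rfl⟩
      have hxd' : (f x).Dom := hxd
      refine ⟨x, ?_⟩
      show (if h : (f x).Dom then (f x).get h else x) ∈ f x
      rw [dif_pos hxd']
      exact Part.get_mem hxd'
  constructor
  · rw [hdom]; exact hf.1.image _
  constructor
  · rw [hdom]
    exact le_trans (Set.ncard_image_le hf.1) hf.2.1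
  · intro y1 h1 y2 h2 b1 b2 hb1 hb2
    have e1 := pinv_spec hb1
    have e2 := pinv_spec hb2
    have d1 : b1 ∈ f.Dom := (PFun.mem_dom _ _).mpr ⟨y1, e1⟩
    have d2 : b2 ∈ f.Dom := (PFun.mem_dom _ _).mpr ⟨y2, e2⟩
    exact (hf.2.2 b1 d1 b2 d2 y1 y2 e1 e2).symm

/-- Inversion `α ↦ α⁻¹` on `OI_n(L)`: the inverse partial bijection. -/
noncomputable instance [LinearOrder L] {n : ℕ} : Inv (OI L n) :=
  ⟨fun a => ⟨_root_.pinv a.1, a.2.pinv⟩⟩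

/-- The natural partial order on the inverse semigroup `OI_n(L)`:
`a ≼ b` iff `a = b * e` for some idempotent `e`. -/
def nle [LinearOrder L] {n : ℕ} (a b : OI L n) : Prop :=
  ∃ e : OI L n, e * e = e ∧ a = b * e

/-- The up-set `↑_≼ a = {b | a ≼ b}` with respect to the natural partial order. -/
def upSet [LinearOrder L] {n : ℕ} (a : OI L n) : Set (OI L n) := {b | nle a b}

/-- Multiplication of the semigroup `B_X` of `X × X`-matrix units, realized on
`Option (X × X)` with `none` playing the role of the zero:
`(a,b)·(c,d) = (a,d)` if `b = c` and `0` otherwise, `0` being absorbing. -/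
noncomputable def matUnitsMul {X : Type*} : Option (X × X) → Option (X × X) → Option (X × X)
  | some p, some q => by classical exact if p.2 = q.1 then some (p.1, q.2) else none
  | _, _ => none


section AuxMatUnits

theorem matUnitsMul_none_left {X : Type*} (q : Option (X × X)) :
    matUnitsMul none q = none := rfl

theorem matUnitsMul_none_right {X : Type*} (p : Option (X × X)) :
    matUnitsMul p none = none := by cases p <;> rfl

theorem matUnitsMul_pos {X : Type*} (p q : X × X) (h : p.2 = q.1) :
    matUnitsMul (some p) (some q) = some (p.1, q.2) := by
  simp [matUnitsMul, h]

theorem matUnitsMul_neg {X : Type*} (p q : X × X) (h : p.2 ≠ q.1) :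
    matUnitsMul (some p) (some q) = none := by
  simp [matUnitsMul, h]

theorem matUnitsMul_chain {X : Type*} (a b c : X) :
    matUnitsMul (some (a, b)) (some (b, c)) = some (a, c) :=
  matUnitsMul_pos _ _ rfl

end AuxMatUnits

section AuxOI

variable [LinearOrder L] {n : ℕ}

/-- The zero (empty) element of `OI L n`. -/
def zOI (L : Type u) [LinearOrder L] (n : ℕ) : OI L n :=
  ⟨fun _ => Part.none, by
    have hd : PFun.Dom (fun _ : L => (Part.none : Part L)) = (∅ : Set L) := by
      ext x; simp [PFun.Dom]
    refine ⟨?_, ?_, ?_⟩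
    · rw [hd]; exact Set.finite_empty
    · rw [hd]; simp
    · intro x hx
      rw [hd] at hx
      exact absurd hx (Set.notMem_empty x)⟩

theorem zOI_dom : (zOI L n).1.Dom = (∅ : Set L) := by
  ext x; simp [zOI, PFun.Dom]

theorem zOI_ncard : (zOI L n).1.Dom.ncard = 0 := by
  rw [zOI_dom]; simp

theorem mul_def (a b : OI L n) : (a * b).1 = b.1.comp a.1 := rfl

theorem zOI_mul (a : OI L n) : zOI L n * a = zOI L n := by
  apply Subtype.ext
  rw [mul_def]
  apply PFun.ext
  intro x b
  rw [PFun.comp_apply]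
  constructor
  · intro hb
    obtain ⟨u, hu, -⟩ := Part.mem_bind_iff.mp hb
    exact absurd hu (Part.notMem_none _)
  · intro hb
    exact absurd hb (Part.notMem_none _)

theorem mul_zOI (a : OI L n) : a * zOI L n = zOI L n := by
  apply Subtype.ext
  rw [mul_def]
  apply PFun.ext
  intro x b
  rw [PFun.comp_apply]
  simp [PFun.comp_apply, zOI, Part.mem_bind_iff]

theorem eq_zOI (a : OI L n) (h : a.1.Dom.ncard = 0) : a = zOI L n := by
  have hd : a.1.Dom = ∅ := (Set.ncard_eq_zero a.2.1).mp h
  apply Subtype.ext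
  apply PFun.ext
  intro x b
  simp only [zOI, Part.notMem_none, iff_false]
  intro hb
  have : x ∈ a.1.Dom := (PFun.mem_dom _ _).mpr ⟨b, hb⟩
  rw [hd] at this
  exact this

end AuxOI

section AuxMk

variable [LinearOrder L] {n : ℕ}

/-- The canonical order-preserving partial bijection from `A` onto `B`. -/
def mkpf (A B : Finset L) {k : ℕ} (hA : A.card = k) (hB : B.card = k) : L →. L :=
  fun x => ⟨x ∈ A, fun hx => B.orderEmbOfFin hB ((A.orderIsoOfFin hA).symm ⟨x, hx⟩)⟩

theorem mkpf_mem {A B : Finset L} {k : ℕ} {hA : A.card = k} {hB : B.card = k} {x b : L} :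
    b ∈ mkpf A B hA hB x ↔
      ∃ hx : x ∈ A, B.orderEmbOfFin hB ((A.orderIsoOfFin hA).symm ⟨x, hx⟩) = b :=
  Part.mem_mk_iff

theorem mkpf_dom (A B : Finset L) {k : ℕ} (hA : A.card = k) (hB : B.card = k) :
    (mkpf A B hA hB).Dom = ↑A := rfl

theorem symm_apply_emb {B : Finset L} {k : ℕ} (hB : B.card = k) (i : Fin k)
    (h : B.orderEmbOfFin hB i ∈ B) :
    (B.orderIsoOfFin hB).symm ⟨B.orderEmbOfFin hB i, h⟩ = i := by
  have : (⟨B.orderEmbOfFin hB i, h⟩ : {x // x ∈ B}) = B.orderIsoOfFin hB i :=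
    Subtype.ext (B.coe_orderIsoOfFin_apply hB i).symm
  rw [this, OrderIso.symm_apply_apply]

theorem mkpf_isOI (A B : Finset L) {k : ℕ} (hA : A.card = k) (hB : B.card = k)
    (hk : k ≤ n) : IsOI n (mkpf A B hA hB) := by
  refine ⟨?_, ?_, ?_⟩
  · rw [mkpf_dom]; exact A.finite_toSet
  · rw [mkpf_dom, Set.ncard_coe_finset, hA]; exact hk
  · intro x hx y hy a b ha hb
    obtain ⟨hx', rfl⟩ := mkpf_mem.mp ha
    obtain ⟨hy', rfl⟩ := mkpf_mem.mp hb
    rw [OrderEmbedding.le_iff_le, OrderIso.le_iff_le]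
    exact Iff.symm (Subtype.mk_le_mk)

/-- The canonical element of `OI L n` of rank `k ≤ n` from `A` onto `B`. -/
def mkOI (A B : Finset L) {k : ℕ} (hA : A.card = k) (hB : B.card = k) (hk : k ≤ n) :
    OI L n := ⟨mkpf A B hA hB, mkpf_isOI A B hA hB hk⟩

theorem mkOI_mul_same (A B C : Finset L) {k : ℕ} (hA : A.card = k) (hB : B.card = k)
    (hC : C.card = k) (hk : k ≤ n) :
    mkOI (n := n) A B hA hB hk * mkOI B C hB hC hk = mkOI A C hA hC hk := by
  apply Subtype.ext
  rw [mul_def]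
  apply PFun.ext
  intro x b
  rw [PFun.comp_apply]
  refine Part.mem_bind_iff.trans ?_
  constructor
  · rintro ⟨u, hu, hb⟩
    obtain ⟨hx', rfl⟩ := mkpf_mem.mp hu
    obtain ⟨hu', rfl⟩ := mkpf_mem.mp hb
    refine mkpf_mem.mpr ⟨hx', ?_⟩
    rw [symm_apply_emb]
  · intro hb
    obtain ⟨hx', rfl⟩ := mkpf_mem.mp hb
    refine ⟨B.orderEmbOfFin hB ((A.orderIsoOfFin hA).symm ⟨x, hx'⟩),
      mkpf_mem.mpr ⟨hx', rfl⟩, mkpf_mem.mpr ⟨B.orderEmbOfFin_mem hB _, ?_⟩⟩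
    rw [symm_apply_emb]

theorem mkOI_mul_ne (A B C D : Finset L) {k : ℕ} (hA : A.card = k) (hB : B.card = k)
    (hC : C.card = k) (hD : D.card = k) (hk : k ≤ n) (hBC : B ≠ C) :
    (mkOI (n := n) A B hA hB hk * mkOI C D hC hD hk).1.Dom.ncard < k := by
  classical
  set f : L → L := fun x =>
    if hx : x ∈ A then B.orderEmbOfFin hB ((A.orderIsoOfFin hA).symm ⟨x, hx⟩) else x with hf
  set Dm := (mkOI (n := n) A B hA hB hk * mkOI C D hC hD hk).1.Dom with hDm
  have hDsub : ∀ x ∈ Dm, x ∈ A ∧ f x ∈ B ∧ f x ∈ C := by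
    intro x hx
    obtain ⟨c, hc⟩ := (PFun.mem_dom _ _).mp hx
    rw [mul_def, PFun.comp_apply] at hc
    obtain ⟨u, hu, hc'⟩ := Part.mem_bind_iff.mp hc
    obtain ⟨hx', rfl⟩ := mkpf_mem.mp hu
    obtain ⟨hu', -⟩ := mkpf_mem.mp hc'
    refine ⟨hx', ?_, ?_⟩ <;> rw [hf] <;> simp only [dif_pos hx']
    · exact B.orderEmbOfFin_mem hB _
    · exact hu'
  have hinj : Set.InjOn f Dm := by
    intro x hx y hy hxy
    obtain ⟨hxA, -, -⟩ := hDsub x hx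
    obtain ⟨hyA, -, -⟩ := hDsub y hy
    rw [hf] at hxy
    simp only [dif_pos hxA, dif_pos hyA] at hxy
    have := (B.orderEmbOfFin hB).injective hxy
    have := (A.orderIsoOfFin hA).symm.injective this
    exact Subtype.mk_eq_mk.mp this
  have himg : f '' Dm ⊆ ↑(B ∩ C) := by
    rintro - ⟨x, hx, rfl⟩
    obtain ⟨-, h1, h2⟩ := hDsub x hx
    simp [Finset.mem_inter, h1, h2]
  have hBCcard : (B ∩ C).card < k := by
    rcases lt_or_eq_of_le (le_trans (Finset.card_le_card (Finset.inter_subset_left)) hB.le) with hlt | heq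
    · exact hlt
    · exfalso
      have h1 : B ∩ C = B := Finset.eq_of_subset_of_card_le Finset.inter_subset_left (by omega)
      have h2 : B ⊆ C := by rw [← h1]; exact Finset.inter_subset_right
      exact hBC (Finset.eq_of_subset_of_card_le h2 (by omega))
  calc Dm.ncard = (f '' Dm).ncard := (Set.ncard_image_of_injOn hinj).symm
    _ ≤ (↑(B ∩ C) : Set L).ncard :=
        Set.ncard_le_ncard himg (Finset.finite_toSet _)
    _ < k := by rwa [Set.ncard_coe_finset]

end AuxMk

section AuxCanon

variable [LinearOrder L] {n : ℕ}

theorem eq_mkOI (a : OI L n) {k : ℕ} (hk : a.1.Dom.ncard = k) (hkn : k ≤ n) :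
    ∃ (A B : Finset L) (hA : A.card = k) (hB : B.card = k),
      a = mkOI A B hA hB hkn := by
  classical
  have hfin := a.2.1
  set A : Finset L := hfin.toFinset with hAdef
  have hA : A.card = k := by
    rw [hAdef, ← Set.ncard_eq_toFinset_card _ hfin, hk]
  have hmemA : ∀ x, x ∈ A ↔ x ∈ a.1.Dom := fun x => hfin.mem_toFinset
  have hdomemb : ∀ i : Fin k, (a.1 (A.orderEmbOfFin hA i)).Dom := fun i =>
    (hmemA _).mp (A.orderEmbOfFin_mem hA i)
  set ψ : Fin k → L := fun i => (a.1 (A.orderEmbOfFin hA i)).get (hdomemb i) with hψdef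
  have hψmono : StrictMono ψ := by
    intro i j hij
    have hx := (A.orderEmbOfFin hA).strictMono hij
    have hle : ψ i ≤ ψ j := (a.2.2.2 _ (hdomemb i) _ (hdomemb j) _ _
      (Part.get_mem _) (Part.get_mem _)).mp hx.le
    rcases lt_or_eq_of_le hle with hlt | heq
    · exact hlt
    · exfalso
      have hge : ψ j ≤ ψ i := heq.ge
      have := (a.2.2.2 _ (hdomemb j) _ (hdomemb i) _ _
        (Part.get_mem _) (Part.get_mem _)).mpr hge
      exact absurd (le_antisymm hx.le this) (ne_of_lt hx)
  set B : Finset L := Finset.image ψ Finset.univ with hBdef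
  have hB : B.card = k := by
    rw [hBdef, Finset.card_image_of_injective _ hψmono.injective, Finset.card_univ,
      Fintype.card_fin]
  have hψeq : ψ = B.orderEmbOfFin hB :=
    Finset.orderEmbOfFin_unique hB
      (fun i => Finset.mem_image_of_mem _ (Finset.mem_univ i)) hψmono
  refine ⟨A, B, hA, hB, Subtype.ext (PFun.ext fun x b => ?_)⟩
  show b ∈ a.1 x ↔ b ∈ mkpf A B hA hB x
  rw [mkpf_mem]
  constructor
  · intro hb
    have hxA : x ∈ A := (hmemA x).mpr ((PFun.mem_dom _ _).mpr ⟨b, hb⟩)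
    refine ⟨hxA, ?_⟩
    rw [← hψeq, hψdef]
    have hemb : A.orderEmbOfFin hA ((A.orderIsoOfFin hA).symm ⟨x, hxA⟩) = x := by
      rw [← A.coe_orderIsoOfFin_apply hA, OrderIso.apply_symm_apply]
    have hpart : a.1 (A.orderEmbOfFin hA ((A.orderIsoOfFin hA).symm ⟨x, hxA⟩)) = a.1 x :=
      congrArg a.1 hemb
    rw [← hpart] at hb
    exact Part.get_eq_of_mem hb _
  · rintro ⟨hxA, rfl⟩
    rw [← hψeq, hψdef]
    have hemb : A.orderEmbOfFin hA ((A.orderIsoOfFin hA).symm ⟨x, hxA⟩) = x := by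
      rw [← A.coe_orderIsoOfFin_apply hA, OrderIso.apply_symm_apply]
    have hpart : a.1 (A.orderEmbOfFin hA ((A.orderIsoOfFin hA).symm ⟨x, hxA⟩)) = a.1 x :=
      congrArg a.1 hemb
    obtain ⟨v, hv⟩ := Part.dom_iff_mem.mp (hdomemb ((A.orderIsoOfFin hA).symm ⟨x, hxA⟩))
    have hv' : v ∈ a.1 x := by rw [hpart] at hv; exact hv
    show (a.1 (A.orderEmbOfFin hA ((A.orderIsoOfFin hA).symm ⟨x, hxA⟩))).get
      (hdomemb _) ∈ a.1 x
    rw [Part.get_eq_of_mem hv _]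
    exact hv'

theorem infinite_card_subsets (L : Type u) [Infinite L] {k : ℕ} (hk : 0 < k) :
    Infinite {s : Finset L // s.card = k} := by
  classical
  let f := Infinite.natEmbedding L
  let F : ℕ → Finset L := fun m =>
    insert (f (k - 1 + m)) ((Finset.range (k - 1)).image (fun i => f i))
  have hnotmem : ∀ m, f (k - 1 + m) ∉ (Finset.range (k - 1)).image (fun i => f i) := by
    intro m hmem
    obtain ⟨i, hi, hfi⟩ := Finset.mem_image.mp hmem
    have := f.injective hfi
    rw [Finset.mem_range] at hi
    omega
  have hcard : ∀ m, (F m).card = k := by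
    intro m
    rw [Finset.card_insert_of_notMem (hnotmem m),
      Finset.card_image_of_injective _ f.injective, Finset.card_range]
    omega
  have hFinj : Function.Injective F := by
    intro m m' hmm
    have h1 : f (k - 1 + m) ∈ F m' := by
      rw [← hmm]; exact Finset.mem_insert_self _ _
    rcases Finset.mem_insert.mp h1 with heq | hmem
    · have := f.injective heq; omega
    · exact absurd hmem (by
        obtain ⟨i, hi, hfi⟩ := Finset.mem_image.mp hmem
        have := f.injective hfi
        rw [Finset.mem_range] at hi
        omega)
  exact Infinite.of_injective (fun m => (⟨F m, hcard m⟩ : {s : Finset L // s.card = k}))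
    (fun m m' hmm => hFinj (Subtype.mk_eq_mk.mp hmm))

end AuxCanon

/-- If `S` is any semigroup and `h : OI_n(L) → S` is a non-annihilating
(i.e. non-constant) semigroup homomorphism, then the image `h(OI_n(L))` contains a
subsemigroup isomorphic to the semigroup `B_X` of `X × X`-matrix units for some
infinite set `X`. -/
theorem range_hom_contains_infinite_matrix_units
    (L : Type u) [LinearOrder L] [Infinite L] (n : ℕ) (hn : 0 < n)
    {S : Type v} [Semigroup S]
    (h : OI L n → S) (hhom : ∀ a b : OI L n, h (a * b) = h a * h b)
    (hna : ¬ ∃ s : S, ∀ a : OI L n, h a = s) :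
    ∃ (X : Type u) (_ : Infinite X) (g : Option (X × X) → S),
      Function.Injective g ∧
      (∀ p q : Option (X × X), g (matUnitsMul p q) = g p * g q) ∧
      ∀ p : Option (X × X), g p ∈ Set.range h := by
  classical
  set P : ℕ → Prop := fun j => ∀ a b : OI L n,
    a.1.Dom.ncard ≤ j → b.1.Dom.ncard ≤ j → h a = h b with hPdef
  have hP0 : P 0 := by
    intro a b ha hb
    rw [eq_zOI a (Nat.le_zero.mp ha), eq_zOI b (Nat.le_zero.mp hb)]
  have hPn : ¬ P n := by
    intro hp
    exact hna ⟨h (zOI L n), fun a => hp a (zOI L n) a.2.2.1 (by rw [zOI_ncard]; omega)⟩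
  have hex : ∃ j, ¬ P j := ⟨n, hPn⟩
  set k := Nat.find hex with hkdef
  have hknot : ¬ P k := Nat.find_spec hex
  have hkmin : ∀ m, m < k → P m := fun m hm => not_not.mp (Nat.find_min hex hm)
  have hkpos : 0 < k := Nat.pos_of_ne_zero (fun h0 => hknot (by rw [h0]; exact hP0))
  have hkn : k ≤ n := Nat.find_le hPn
  have hz : ∀ a : OI L n, a.1.Dom.ncard ≤ k - 1 → h a = h (zOI L n) := by
    intro a ha
    exact hkmin (k - 1) (by omega) a (zOI L n) ha (by rw [zOI_ncard]; omega)
  have hzl : ∀ a : OI L n, h (zOI L n) * h a = h (zOI L n) := by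
    intro a; rw [← hhom, zOI_mul]
  have hzr : ∀ a : OI L n, h a * h (zOI L n) = h (zOI L n) := by
    intro a; rw [← hhom, mul_zOI]
  set X := {s : Finset L // s.card = k} with hXdef
  have hXinf : Infinite X := infinite_card_subsets L hkpos
  set m : X → X → OI L n := fun A B => mkOI A.1 B.1 A.2 B.2 hkn with hmdef
  set g : Option (X × X) → S :=
    fun p => Option.rec (h (zOI L n)) (fun r => h (m r.1 r.2)) p with hgdef
  have hgnone : g none = h (zOI L n) := rfl
  have hgsome : ∀ A B : X, g (some (A, B)) = h (m A B) := fun A B => rfl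
  have hmmul : ∀ A B C : X, m A B * m B C = m A C := fun A B C =>
    mkOI_mul_same A.1 B.1 C.1 A.2 B.2 C.2 hkn
  have hmne : ∀ A B C D : X, B ≠ C → h (m A B * m C D) = h (zOI L n) := by
    intro A B C D hBC
    apply hz
    have hlt : (m A B * m C D).1.Dom.ncard < k :=
      mkOI_mul_ne A.1 B.1 C.1 D.1 A.2 B.2 C.2 D.2 hkn
        (fun hh => hBC (Subtype.ext hh))
    omega
  have hgmul : ∀ p q : Option (X × X), g (matUnitsMul p q) = g p * g q := by
    intro p q
    rcases p with _ | ⟨A, B⟩ <;> rcases q with _ | ⟨C, D⟩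
    · rw [matUnitsMul_none_left]; exact (hzl _).symm
    · rw [matUnitsMul_none_left]; exact (hzl _).symm
    · rw [matUnitsMul_none_right]; exact (hzr _).symm
    · by_cases hBC : B = C
      · subst hBC
        rw [matUnitsMul_chain A B D, hgsome, hgsome, hgsome, ← hhom, hmmul]
      · rw [matUnitsMul_neg (A, B) (C, D) (by exact hBC), hgnone, hgsome, hgsome,
          ← hhom, hmne A B C D hBC]
  have key : ∀ a b : X, g (some (a, b)) = g none → ∀ E F : X,
      g (some (E, F)) = g none := by
    intro a b hab E F
    calc g (some (E, F))
        = g (matUnitsMul (matUnitsMul (some (E, a)) (some (a, b))) (some (b, F))) := by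
          rw [matUnitsMul_chain, matUnitsMul_chain]
      _ = (g (some (E, a)) * g (some (a, b))) * g (some (b, F)) := by
          rw [hgmul, hgmul]
      _ = (g (some (E, a)) * g none) * g (some (b, F)) := by rw [hab]
      _ = g (matUnitsMul (matUnitsMul (some (E, a)) none) (some (b, F))) := by
          rw [hgmul, hgmul]
      _ = g none := by rw [matUnitsMul_none_right, matUnitsMul_none_left]
  refine ⟨X, hXinf, g, ?_, hgmul, ?_⟩
  · intro p q hpq
    by_contra hne
    have hall : ∀ E F : X, g (some (E, F)) = g none := by
      rcases p with _ | ⟨a, b⟩ <;> rcases q with _ | ⟨c, d⟩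
      · exact absurd rfl hne
      · exact key c d hpq.symm
      · exact key a b hpq
      · intro E F
        have hmain : g (some (E, F)) =
            g (matUnitsMul (matUnitsMul (some (E, a)) (some (c, d))) (some (b, F))) := by
          calc g (some (E, F))
              = g (matUnitsMul (matUnitsMul (some (E, a)) (some (a, b))) (some (b, F))) := by
                rw [matUnitsMul_chain, matUnitsMul_chain]
            _ = (g (some (E, a)) * g (some (a, b))) * g (some (b, F)) := by
                rw [hgmul, hgmul]
            _ = (g (some (E, a)) * g (some (c, d))) * g (some (b, F)) := by rw [hpq]
            _ = g (matUnitsMul (matUnitsMul (some (E, a)) (some (c, d))) (some (b, F))) := by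
                rw [hgmul, hgmul]
        rw [hmain]
        by_cases hac : a = c
        · subst hac
          have hbd : d ≠ b := by
            intro hdb
            exact hne (by rw [hdb])
          rw [matUnitsMul_chain E a d, matUnitsMul_neg (E, d) (b, F) (by exact hbd)]
        · rw [matUnitsMul_neg (E, a) (c, d) (by exact hac), matUnitsMul_none_left]
    exfalso
    apply hknot
    intro a b ha hb
    have hv : ∀ c : OI L n, c.1.Dom.ncard ≤ k → h c = h (zOI L n) := by
      intro c hc
      rcases Nat.lt_or_ge c.1.Dom.ncard k with hlt | hge
      · exact hz c (by omega)
      · obtain ⟨A, B, hA, hB, rfl⟩ := eq_mkOI c (le_antisymm hc hge) hkn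
        have := hall ⟨A, hA⟩ ⟨B, hB⟩
        rw [hgsome, hgnone] at this
        exact this
    rw [hv a ha, hv b hb]
  · intro p
    rcases p with _ | ⟨A, B⟩
    · exact ⟨zOI L n, rfl⟩
    · exact ⟨m A B, rfl⟩
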